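/- arXiv:2201.10604 — 2 statements merged into one kernel-verified Lean document; each statement's English description precedes it below -/
import Mathlib

section
/- Let B be a bounded self-adjoint operator and A a closed operator with BA ⊆ AB. Then f(B)A ⊆ Af(B) for every continuous function f on σ(B). In particular, if B is positive, then √B·A ⊆ A·√B. -/
namespace FP

open LinearPMap
open scoped ComplexOrder

/-- The graph of the natural-domain composition `g ∘ f` of two partially defined
linear operators. -/
def compGraph {R E F G : Type*} [Ring R] [AddCommGroup E] [Module R E] [AddCommGroup F]
    [Module R F] [AddCommGroup G] [Module R G] (g : F →ₗ.[R] G) (f : E →ₗ.[R] F) :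
    Submodule R (E × G) where
  carrier := {p | ∃ y : F, (p.1, y) ∈ f.graph ∧ (y, p.2) ∈ g.graph}
  add_mem' := by
    rintro ⟨a, b⟩ ⟨c, d⟩ ⟨y, hy1, hy2⟩ ⟨z, hz1, hz2⟩
    exact ⟨y + z, f.graph.add_mem hy1 hz1, g.graph.add_mem hy2 hz2⟩
  zero_mem' := ⟨0, f.graph.zero_mem, g.graph.zero_mem⟩
  smul_mem' := by
    rintro c ⟨a, b⟩ ⟨y, h1, h2⟩
    exact ⟨c • y, f.graph.smul_mem c h1, g.graph.smul_mem c h2⟩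

/-- The product (composition) `g ∘ f` of two partially defined linear operators,
defined on its natural domain `{x ∈ D(f) : f x ∈ D(g)}`. -/
noncomputable def pComp {R E F G : Type*} [Ring R] [AddCommGroup E] [Module R E] [AddCommGroup F]
    [Module R F] [AddCommGroup G] [Module R G] (g : F →ₗ.[R] G) (f : E →ₗ.[R] F) :
    E →ₗ.[R] G :=
  (compGraph g f).toLinearPMap

variable {H : Type*} [NormedAddCommGroup H] [InnerProductSpace ℂ H] [CompleteSpace H]

/-- The everywhere-defined partial operator associated with a bounded operator. -/
def ofCLM (B : H →L[ℂ] H) : H →ₗ.[ℂ] H := B.toLinearMap.toPMap ⊤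

/-- A densely defined partial operator `T` is normal when it is closed and `T*T = TT*`
(products on their natural domains). -/
def IsNormalPMap (T : H →ₗ.[ℂ] H) : Prop :=
  Dense (T.domain : Set H) ∧ T.IsClosed ∧ pComp T† T = pComp T T†

/-- A partial operator is positive when `⟨Tx, x⟩ ≥ 0` for all `x ∈ D(T)`. -/
def IsPosPMap (T : H →ₗ.[ℂ] H) : Prop :=
  ∀ x : T.domain, (0 : ℂ) ≤ inner ℂ (T x) (x : H)

/-- A partial operator `A` is boundedly invertible if there is `B ∈ B(H)` with
`AB = I` and `BA ⊆ I`. -/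
def BoundedlyInvertible (A : H →ₗ.[ℂ] H) : Prop :=
  ∃ B : H →L[ℂ] H, pComp A (ofCLM B) = ofCLM 1 ∧ pComp (ofCLM B) A ≤ ofCLM 1

/-- The operator `λI - A` on the domain of `A`. -/
noncomputable def shift (l : ℂ) (A : H →ₗ.[ℂ] H) : H →ₗ.[ℂ] H :=
  (l • LinearMap.id : H →ₗ[ℂ] H) +ᵥ (-A)

/-- The spectrum of a partial operator. -/
def pSpectrum (A : H →ₗ.[ℂ] H) : Set ℂ :=
  {l | ¬ BoundedlyInvertible (shift l A)}

/-- Powers of a partial operator, on natural domains. -/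
noncomputable def pPow (A : H →ₗ.[ℂ] H) : ℕ → H →ₗ.[ℂ] H
  | 0 => ofCLM 1
  | n + 1 => pComp A (pPow A n)

noncomputable def polyAux (p : Polynomial ℂ) (A : H →ₗ.[ℂ] H) : ℕ → H →ₗ.[ℂ] H
  | 0 => p.coeff 0 • pPow A 0
  | n + 1 => polyAux p A n + p.coeff (n + 1) • pPow A (n + 1)

/-- The polynomial `p` applied to a partial operator `A`, on its natural domain. -/
noncomputable def polyApply (p : Polynomial ℂ) (A : H →ₗ.[ℂ] H) : H →ₗ.[ℂ] H :=
  polyAux p A p.natDegree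

/-!
The bounded operators `T` with `T A ⊆ A T` are exactly those for which `T × T` maps the graph
of `A` into itself. They form a subalgebra, which is norm closed because the graph of `A` is
closed. It contains `B`, and `star B = B`, so it contains the closed `ℝ`-star-subalgebra generated
by `B`, where every `cfc f B` lies. The positive square root of `B` is `cfc Real.sqrt B`.
-/

section Composition

variable {R E F G : Type*} [Ring R] [AddCommGroup E] [Module R E] [AddCommGroup F]
  [Module R F] [AddCommGroup G] [Module R G]

lemma pComp_graph (g : F →ₗ.[R] G) (f : E →ₗ.[R] F) : (pComp g f).graph = compGraph g f := by
  refine Submodule.toLinearPMap_graph_eq _ ?_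
  rintro ⟨x, z⟩ ⟨y, hxy, hyz⟩ (rfl : x = 0)
  exact g.graph_fst_eq_zero_snd hyz (f.graph_fst_eq_zero_snd hxy rfl)

end Composition

section Stabilizer

variable {𝕜 E : Type*} [NontriviallyNormedField 𝕜] [NormedAddCommGroup E] [NormedSpace 𝕜 E]

def graphStabilizer (A : E →ₗ.[𝕜] E) : Subalgebra 𝕜 (E →L[𝕜] E) where
  carrier := {T | ∀ x y : E, (x, y) ∈ A.graph → (T x, T y) ∈ A.graph}
  mul_mem' hS hT x y hxy := hS _ _ (hT x y hxy)
  one_mem' _ _ hxy := hxy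
  add_mem' hS hT x y hxy := A.graph.add_mem (hS x y hxy) (hT x y hxy)
  zero_mem' _ _ _ := A.graph.zero_mem
  algebraMap_mem' c _ _ hxy := A.graph.smul_mem c hxy

lemma mem_graphStabilizer {A : E →ₗ.[𝕜] E} {T : E →L[𝕜] E} :
    T ∈ graphStabilizer A ↔ ∀ x y : E, (x, y) ∈ A.graph → (T x, T y) ∈ A.graph :=
  Iff.rfl

lemma isClosed_graphStabilizer {A : E →ₗ.[𝕜] E} (hA : A.IsClosed) :
    IsClosed (graphStabilizer A : Set (E →L[𝕜] E)) := by
  change IsClosed {T : E →L[𝕜] E | ∀ x y : E, (x, y) ∈ A.graph → (T x, T y) ∈ A.graph}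
  simp only [Set.ofPred_forall]
  refine isClosed_iInter fun x => isClosed_iInter fun y => isClosed_iInter fun _ => ?_
  exact hA.preimage <|
    (ContinuousLinearMap.apply 𝕜 E x).continuous.prodMk (ContinuousLinearMap.apply 𝕜 E y).continuous

end Stabilizer

lemma elemental_le_of_isSelfAdjoint {R A : Type*} [CommSemiring R] [StarRing R]
    [TopologicalSpace A] [Semiring A] [StarRing A] [IsSemitopologicalSemiring A]
    [ContinuousStar A] [Algebra R A] [StarModule R A] {x : A} (hx : IsSelfAdjoint x)
    {S : Subalgebra R A} (hS : IsClosed (S : Set A)) (hxS : x ∈ S) :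
    (StarAlgebra.elemental R x).toSubalgebra ≤ S := by
  rw [StarAlgebra.elemental, StarSubalgebra.topologicalClosure_toSubalgebra_comm,
    StarAlgebra.adjoin_toSubalgebra, Set.star_singleton, hx.star_eq, Set.union_self]
  exact Subalgebra.topologicalClosure_minimal (Algebra.adjoin_le (by simpa using hxS)) hS

section OfCLM

variable {V : Type*} [NormedAddCommGroup V] [InnerProductSpace ℂ V]

lemma mem_graph_ofCLM (T : V →L[ℂ] V) {x y : V} : (x, y) ∈ (ofCLM T).graph ↔ y = T x := by
  simp [ofCLM, LinearPMap.mem_graph_iff, eq_comm]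

lemma pComp_ofCLM_le_iff (T : V →L[ℂ] V) (A : V →ₗ.[ℂ] V) :
    pComp (ofCLM T) A ≤ pComp A (ofCLM T) ↔ T ∈ graphStabilizer A := by
  rw [← LinearPMap.le_graph_iff, pComp_graph, pComp_graph, mem_graphStabilizer]
  constructor
  · intro hle x y hxy
    obtain ⟨z, hxz, hzy⟩ := hle (x := (x, T y)) ⟨y, hxy, (mem_graph_ofCLM T).2 rfl⟩
    rwa [← (mem_graph_ofCLM T).1 hxz]
  · rintro hT ⟨x, z⟩ ⟨y, hxy, hyz : (y, z) ∈ (ofCLM T).graph⟩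
    rw [(mem_graph_ofCLM T).1 hyz]
    exact ⟨T x, (mem_graph_ofCLM T).2 rfl, hT x y hxy⟩

end OfCLM

theorem stmt6_general (B : H →L[ℂ] H) (A : H →ₗ.[ℂ] H) (hB : IsSelfAdjoint B)
    (hAclosed : A.IsClosed)
    (h : pComp (ofCLM B) A ≤ pComp A (ofCLM B)) :
    (∀ f : ℝ → ℝ, ContinuousOn f (spectrum ℝ B) →
      pComp (ofCLM (cfc f B)) A ≤ pComp A (ofCLM (cfc f B))) ∧
    (B.IsPositive → ∀ S : H →L[ℂ] H, S.IsPositive → S * S = B →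
      pComp (ofCLM S) A ≤ pComp A (ofCLM S)) := by
  have hB_mem : B ∈ graphStabilizer A := (pComp_ofCLM_le_iff B A).1 h
  have hcfc (f : ℝ → ℝ) : cfc f B ∈ graphStabilizer A :=
    elemental_le_of_isSelfAdjoint (S := (graphStabilizer A).restrictScalars ℝ) hB
      (isClosed_graphStabilizer hAclosed) hB_mem (cfc_mem_elemental f B)
  refine ⟨fun f _ => (pComp_ofCLM_le_iff _ A).2 (hcfc f), fun hBpos S hSpos hSS => ?_⟩
  have hS_sqrt : S = cfc Real.sqrt B := by
    rw [← cfcₙ_eq_cfc,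
      ← CFC.sqrt_eq_real_sqrt B ((ContinuousLinearMap.nonneg_iff_isPositive B).2 hBpos),
      CFC.sqrt_unique hSS ((ContinuousLinearMap.nonneg_iff_isPositive S).2 hSpos)]
  exact (pComp_ofCLM_le_iff S A).2 (hS_sqrt ▸ hcfc Real.sqrt)

theorem stmt6 (B : H →L[ℂ] H) (A : H →ₗ.[ℂ] H) (hB : IsSelfAdjoint B)
    (hAdense : Dense (A.domain : Set H)) (hAclosed : A.IsClosed)
    (h : pComp (ofCLM B) A ≤ pComp A (ofCLM B)) :
    (∀ f : ℝ → ℝ, ContinuousOn f (spectrum ℝ B) →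
      pComp (ofCLM (cfc f B)) A ≤ pComp A (ofCLM (cfc f B))) ∧
    (B.IsPositive → ∀ S : H →L[ℂ] H, S.IsPositive → S * S = B →
      pComp (ofCLM S) A ≤ pComp A (ofCLM S)) :=
  stmt6_general B A hB hAclosed h

end FP
end

section
/- There exist a self-adjoint 2×2 complex matrix A and a positive 2×2 matrix B such that (AB)^n is self-adjoint (in fact zero) for every n ≥ 2, yet AB is not self-adjoint. -/
namespace FP

open LinearPMap
open scoped ComplexOrder

variable {H : Type*} [NormedAddCommGroup H] [InnerProductSpace ℂ H] [CompleteSpace H]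

section

open Matrix

variable {n α : Type*} [DecidableEq n]

theorem single_mul_self_of_ne [Fintype n] [NonUnitalNonAssocSemiring α] {i j : n} (hij : i ≠ j) (c : α) :
    single i j c * single i j c = 0 :=
  single_mul_single_of_ne c i j i hij.symm c

theorem not_isHermitian_single [AddMonoid α] [StarAddMonoid α] {i j : n} (hij : i ≠ j) {c : α}
    (hc : c ≠ 0) : ¬(single i j c).IsHermitian := fun h => by
  have hji := h.apply i j
  rw [single_apply_of_row_ne hij, star_zero, single_apply_same] at hji
  exact hc hji.symm

end

open Matrix in
theorem swap_mul_diagonal_eq_single :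
    !![(0 : ℂ), 1; 1, 0] * diagonal ![0, 1] = single 0 1 1 := by
  ext i j
  fin_cases i <;> fin_cases j <;> simp

theorem stmt13 : ∃ A B : Matrix (Fin 2) (Fin 2) ℂ, A.IsHermitian ∧ B.PosSemidef ∧
    (∀ n : ℕ, 2 ≤ n → ((A * B) ^ n).IsHermitian ∧ (A * B) ^ n = 0) ∧
    ¬(A * B).IsHermitian := by
  have hA : (!![(0 : ℂ), 1; 1, 0]).IsHermitian := by
    ext i j
    fin_cases i <;> fin_cases j <;> simp
  have hB : (Matrix.diagonal ![(0 : ℂ), 1]).PosSemidef := by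
    rw [Matrix.posSemidef_diagonal_iff]
    intro i
    fin_cases i <;> simp
  refine ⟨_, _, hA, hB, fun n hn => ?_, ?_⟩
  · have hpow : (!![(0 : ℂ), 1; 1, 0] * Matrix.diagonal ![0, 1]) ^ n = 0 := by
      refine pow_eq_zero_of_le hn ?_
      rw [swap_mul_diagonal_eq_single, sq, single_mul_self_of_ne (by decide)]
    exact ⟨hpow ▸ Matrix.isHermitian_zero, hpow⟩
  · rw [swap_mul_diagonal_eq_single]
    exact not_isHermitian_single (by decide) one_ne_zero

end FP
end
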